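/- Let F be differentiable with L-Lipschitz gradient and let (w_t), (v_t) be SGD trajectories over Bregman loss on the same sample sequence starting from initial points w_0 and v_0 = w_0 + δ/K for some δ ∈ ℝ^d (i.e. the perturbation of the initial aggregated model caused by one client changing one sample). Then for all g ∈ ℝ^d, ∑_{t=1}^τ η_t ⟪g, ∇F(w_{t-1}) - ∇F(v_{t-1})⟫ ≤ (L b / K) ‖g‖ ‖δ‖ with b = ∑_{t=1}^τ η_t ∏_{h=1}^{t-1}(1 + Lη_h). -/

import Mathlib

open InnerProductSpace Finset

/-!
The gradient step `x ↦ x - η (G x - c)` with an `L`-Lipschitz map `G` is `(1 + L η)`-Lipschitz,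
so along two trajectories driven by the same samples the gap `‖w t - v t‖` grows at most by the
factor `1 + L η (t + 1)` per step, starting from `‖δ‖ / K`. Each summand is then bounded by
Cauchy–Schwarz and the Lipschitz bound: `⟪g, G (w t) - G (v t)⟫ ≤ ‖g‖ L ‖w t - v t‖`.
-/

section GradientSteps

variable {E : Type*} [NormedAddCommGroup E] {G : E → E} {L : ℝ} {η : ℕ → ℝ} {τ : ℕ}
  {c w v : ℕ → E}

lemma nonneg_of_norm_sub_le_mul_norm_sub [Nontrivial E]
    (hG : ∀ x y, ‖G x - G y‖ ≤ L * ‖x - y‖) : 0 ≤ L := by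
  obtain ⟨x, hx⟩ := exists_ne (0 : E)
  have h := (norm_nonneg _).trans (hG x 0)
  rw [sub_zero] at h
  exact nonneg_of_mul_nonneg_left h (norm_pos_iff.mpr hx)

section NormedSpace

variable [NormedSpace ℝ E]

lemma norm_gradientStep_sub_le (hG : ∀ x y, ‖G x - G y‖ ≤ L * ‖x - y‖) {a : ℝ} (ha : 0 ≤ a)
    (c x y : E) :
    ‖(x - a • (G x - c)) - (y - a • (G y - c))‖ ≤ (1 + L * a) * ‖x - y‖ := by
  have hstep : (x - a • (G x - c)) - (y - a • (G y - c)) = (x - y) - a • (G x - G y) := by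
    simp only [smul_sub]
    abel
  calc ‖(x - a • (G x - c)) - (y - a • (G y - c))‖
      ≤ ‖x - y‖ + a * ‖G x - G y‖ := by
        rw [hstep]
        refine (norm_sub_le _ _).trans_eq ?_
        rw [norm_smul, Real.norm_of_nonneg ha]
    _ ≤ ‖x - y‖ + a * (L * ‖x - y‖) := by gcongr; exact hG x y
    _ = (1 + L * a) * ‖x - y‖ := by ring

lemma norm_sub_le_prod_of_gradientSteps (hG : ∀ x y, ‖G x - G y‖ ≤ L * ‖x - y‖) (hL : 0 ≤ L)
    (hη : ∀ t, 0 ≤ η t)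
    (hw : ∀ t < τ, w (t + 1) = w t - η (t + 1) • (G (w t) - c (t + 1)))
    (hv : ∀ t < τ, v (t + 1) = v t - η (t + 1) • (G (v t) - c (t + 1))) :
    ∀ t ≤ τ, ‖w t - v t‖ ≤ ‖w 0 - v 0‖ * ∏ h ∈ range t, (1 + L * η (h + 1)) := by
  intro t ht
  induction t with
  | zero => simp
  | succ n ih =>
    have hn : n < τ := ht
    calc ‖w (n + 1) - v (n + 1)‖ ≤ (1 + L * η (n + 1)) * ‖w n - v n‖ := by
          rw [hw n hn, hv n hn]
          exact norm_gradientStep_sub_le hG (hη _) _ _ _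
      _ ≤ (1 + L * η (n + 1)) * (‖w 0 - v 0‖ * ∏ h ∈ range n, (1 + L * η (h + 1))) := by
          gcongr
          · nlinarith [hη (n + 1)]
          · exact ih hn.le
      _ = ‖w 0 - v 0‖ * ∏ h ∈ range (n + 1), (1 + L * η (h + 1)) := by
          rw [prod_range_succ]
          ring

end NormedSpace

lemma sum_inner_sub_le_of_gradientSteps [InnerProductSpace ℝ E]
    (hG : ∀ x y, ‖G x - G y‖ ≤ L * ‖x - y‖) (hL : 0 ≤ L) (hη : ∀ t, 0 ≤ η t)
    (hw : ∀ t < τ, w (t + 1) = w t - η (t + 1) • (G (w t) - c (t + 1)))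
    (hv : ∀ t < τ, v (t + 1) = v t - η (t + 1) • (G (v t) - c (t + 1))) (g : E) :
    ∑ t ∈ range τ, η (t + 1) * inner ℝ g (G (w t) - G (v t))
      ≤ L * (∑ t ∈ range τ, η (t + 1) * ∏ h ∈ range t, (1 + L * η (h + 1)))
          * ‖g‖ * ‖w 0 - v 0‖ := by
  rw [mul_assoc, mul_assoc, sum_mul, mul_sum]
  refine sum_le_sum fun t ht => ?_
  have hgap := norm_sub_le_prod_of_gradientSteps hG hL hη hw hv t (mem_range.mp ht).le
  calc η (t + 1) * inner ℝ g (G (w t) - G (v t))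
      ≤ η (t + 1) * (‖g‖ * (L * ‖w t - v t‖)) := by
        gcongr
        · exact hη _
        · exact (real_inner_le_norm _ _).trans (by gcongr; exact hG _ _)
    _ ≤ η (t + 1) * (‖g‖ * (L * (‖w 0 - v 0‖ * ∏ h ∈ range t, (1 + L * η (h + 1))))) := by
        gcongr
        exact hη _
    _ = L * (η (t + 1) * (∏ h ∈ range t, (1 + L * η (h + 1))) * (‖g‖ * ‖w 0 - v 0‖)) := by
        ring

end GradientSteps

theorem sgd_inner_product_bound_aggregated_general {d K : ℕ}
    (F : EuclideanSpace ℝ (Fin d) → ℝ) (L : ℝ)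
    (hLip : ∀ x y, ‖gradient F x - gradient F y‖ ≤ L * ‖x - y‖)
    (τ : ℕ) (η : ℕ → ℝ) (hη : ∀ t, 0 < η t)
    (z w v : ℕ → EuclideanSpace ℝ (Fin d)) (δ : EuclideanSpace ℝ (Fin d))
    (h0 : v 0 = w 0 + (1 / (K : ℝ)) • δ)
    (hw : ∀ t < τ, w (t + 1) = w t - η (t + 1) • (gradient F (w t) - gradient F (z (t + 1))))
    (hv : ∀ t < τ, v (t + 1) = v t - η (t + 1) • (gradient F (v t) - gradient F (z (t + 1))))
    (g : EuclideanSpace ℝ (Fin d)) :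
    ∑ t ∈ Finset.range τ, η (t + 1) * (inner ℝ g (gradient F (w t) - gradient F (v t)) : ℝ)
      ≤ (L * (∑ t ∈ Finset.range τ, η (t + 1) * ∏ h ∈ Finset.range t, (1 + L * η (h + 1)))
          / K) * ‖g‖ * ‖δ‖ := by
  -- `hLip` forces `0 ≤ L` only on a nontrivial space; on the zero space `g = 0`.
  cases subsingleton_or_nontrivial (EuclideanSpace ℝ (Fin d)) with
  | inl _ => simp [Subsingleton.elim g 0]
  | inr _ =>
    have hL := nonneg_of_norm_sub_le_mul_norm_sub hLip
    have hgap0 : ‖w 0 - v 0‖ = ‖δ‖ / K := by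
      rw [h0, sub_add_cancel_left, norm_neg, norm_smul, one_div, norm_inv, RCLike.norm_natCast,
        inv_mul_eq_div]
    calc _ ≤ _ := sum_inner_sub_le_of_gradientSteps (c := fun t => gradient F (z t)) hLip hL
            (fun t => (hη t).le) hw hv g
      _ = _ := by rw [hgap0]; ring

/-- When the initial points of two parallel SGD trajectories differ by `δ/K` (the perturbation
of the aggregated model caused by one client changing one sample), the inner product sum is
bounded by `(L b / K) ‖g‖ ‖δ‖`. -/
theorem sgd_inner_product_bound_aggregated {d K : ℕ} (hK : 0 < K)
    (F : EuclideanSpace ℝ (Fin d) → ℝ) (hF : Differentiable ℝ F) (L : ℝ)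
    (hLip : ∀ x y, ‖gradient F x - gradient F y‖ ≤ L * ‖x - y‖)
    (τ : ℕ) (η : ℕ → ℝ) (hη : ∀ t, 0 < η t)
    (z w v : ℕ → EuclideanSpace ℝ (Fin d)) (δ : EuclideanSpace ℝ (Fin d))
    (h0 : v 0 = w 0 + (1 / (K : ℝ)) • δ)
    (hw : ∀ t < τ, w (t + 1) = w t - η (t + 1) • (gradient F (w t) - gradient F (z (t + 1))))
    (hv : ∀ t < τ, v (t + 1) = v t - η (t + 1) • (gradient F (v t) - gradient F (z (t + 1))))
    (g : EuclideanSpace ℝ (Fin d)) :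
    ∑ t ∈ Finset.range τ, η (t + 1) * (inner ℝ g (gradient F (w t) - gradient F (v t)) : ℝ)
      ≤ (L * (∑ t ∈ Finset.range τ, η (t + 1) * ∏ h ∈ Finset.range t, (1 + L * η (h + 1)))
          / K) * ‖g‖ * ‖δ‖ :=
  sgd_inner_product_bound_aggregated_general F L hLip τ η hη z w v δ h0 hw hv g
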